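/- arXiv:1502.00148 — 2 statements merged into one kernel-verified Lean document; each statement's English description precedes it below -/
import Mathlib

section
/- Fix x, y ∈ S such that u^α(x,y) < ∞ for every α > 0. Then for every α > 0 the integral ∫_S u^α(x,w) u^α(w,y) dm(w) is finite, and the function β ↦ u^β(x,y) (real-valued on (0,∞)) is differentiable at α with derivative d/dα u^α(x,y) = − ∫_S u^α(x,w) u^α(w,y) dm(w). -/
/-!
For `a ≤ b` the resolvent equation reads `u^a(x,y) - u^b(x,y) = (b - a) ∫ u^a(x,w) u^b(w,y) dm(w)`,
so the difference quotient of `β ↦ u^β(x,y)` between `α` and `β` is minus the integral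
`∫ u^{min α β}(x,w) u^{max α β}(w,y) dm(w)`, and it suffices to show that this integral tends to
`∫ u^α(x,w) u^α(w,y) dm(w)` as `β → α`. Fix `γ < α`. Applying the resolvent equation a second
time, between `γ` and `b`, bounds its integral term and gives
`u^a ≤ u^b + (b - a)/(b - γ) · u^γ` pointwise. Hence moving one index of the integral by `h`
changes it by at most `O(h) · ∫ u^γ(x,w) u^γ(w,y) dm(w)`, and this integral is finite because
`u^{γ/2}(x,y) < ∞`.
-/

open MeasureTheory ENNReal Filter Set Topology

theorem hasDerivAt_of_eventually_sub_eq_smul {𝕜 F : Type*} [NontriviallyNormedField 𝕜]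
    [NormedAddCommGroup F] [NormedSpace 𝕜 F] {f g : 𝕜 → F} {a : 𝕜} {f' : F}
    (hfg : ∀ᶠ z in 𝓝 a, f z - f a = (z - a) • g z) (hg : Tendsto g (𝓝 a) (𝓝 f')) :
    HasDerivAt f f' a := by
  rw [hasDerivAt_iff_tendsto_slope]
  refine (hg.mono_left nhdsWithin_le_nhds).congr' ?_
  filter_upwards [nhdsWithin_le_nhds hfg, self_mem_nhdsWithin] with z hz hza
  rw [slope_def_module, hz, smul_smul, inv_mul_cancel₀ (sub_ne_zero.2 hza), one_smul]

section Resolvent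

variable {S : Type*} [MeasurableSpace S] {m : Measure S} {u : ℝ → S → S → ℝ≥0∞}
  {a b c γ : ℝ} {x y : S}

noncomputable def resolventComp (m : Measure S) (u : ℝ → S → S → ℝ≥0∞) (a b : ℝ) (x y : S) :
    ℝ≥0∞ :=
  ∫⁻ w, u a x w * u b w y ∂m

def SatisfiesResolventEq (m : Measure S) (u : ℝ → S → S → ℝ≥0∞) : Prop :=
  ∀ a b : ℝ, 0 ≤ a → a ≤ b → ∀ x y : S,
    u a x y = u b x y + ENNReal.ofReal (b - a) * resolventComp m u a b x y

namespace SatisfiesResolventEq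

theorem antitone (hu : SatisfiesResolventEq m u) (ha : 0 ≤ a) (hab : a ≤ b) :
    u b x y ≤ u a x y := by
  rw [hu a b ha hab x y]
  exact le_self_add

theorem resolventComp_anti (hu : SatisfiesResolventEq m u) {a' b' : ℝ} (ha : 0 ≤ a)
    (haa' : a ≤ a') (hb : 0 ≤ b) (hbb' : b ≤ b') :
    resolventComp m u a' b' x y ≤ resolventComp m u a b x y :=
  lintegral_mono fun _ => mul_le_mul' (hu.antitone ha haa') (hu.antitone hb hbb')

theorem le_add_ofReal_mul (hu : SatisfiesResolventEq m u) (hγ : 0 ≤ γ) (hγa : γ ≤ a)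
    (hab : a ≤ b) :
    u a x y ≤ u b x y + ENNReal.ofReal ((b - a) / (b - γ)) * u γ x y := by
  rcases hγa.trans hab |>.eq_or_lt with hγb | hγb
  · obtain rfl : a = b := le_antisymm hab (hγb ▸ hγa)
    exact le_self_add
  have hsplit : ENNReal.ofReal (b - a) =
      ENNReal.ofReal ((b - a) / (b - γ)) * ENNReal.ofReal (b - γ) := by
    rw [← ENNReal.ofReal_mul (div_nonneg (by linarith) (by linarith)),
      div_mul_cancel₀ _ (by linarith)]
  calc u a x y = u b x y + ENNReal.ofReal (b - a) * resolventComp m u a b x y :=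
        hu a b (hγ.trans hγa) hab x y
    _ ≤ u b x y + ENNReal.ofReal ((b - a) / (b - γ)) *
          (ENNReal.ofReal (b - γ) * resolventComp m u γ b x y) := by
        rw [hsplit, mul_assoc]
        gcongr
        exact hu.resolventComp_anti hγ hγa (hγ.trans hγb.le) le_rfl
    _ ≤ u b x y + ENNReal.ofReal ((b - a) / (b - γ)) * u γ x y := by
        rw [hu γ b hγ hγb.le x y]
        gcongr
        exact le_add_self

theorem resolventComp_le_add_left (hu : SatisfiesResolventEq m u)
    (hmeas : Measurable fun q : S × S => u γ q.1 q.2) (hγ : 0 ≤ γ) (hγa : γ ≤ a) (hab : a ≤ b)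
    (hγc : γ ≤ c) :
    resolventComp m u a c x y ≤ resolventComp m u b c x y +
      ENNReal.ofReal ((b - a) / (b - γ)) * resolventComp m u γ γ x y := by
  have hγγ : Measurable fun w => u γ x w * u γ w y :=
    (hmeas.comp measurable_prodMk_left).mul (hmeas.comp measurable_prodMk_right)
  calc resolventComp m u a c x y
      ≤ ∫⁻ w, u b x w * u c w y +
          ENNReal.ofReal ((b - a) / (b - γ)) * (u γ x w * u γ w y) ∂m := by
        refine lintegral_mono fun w => ?_
        calc u a x w * u c w y
            ≤ (u b x w + ENNReal.ofReal ((b - a) / (b - γ)) * u γ x w) * u c w y := by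
              gcongr; exact hu.le_add_ofReal_mul hγ hγa hab
          _ = u b x w * u c w y + ENNReal.ofReal ((b - a) / (b - γ)) * (u γ x w * u c w y) := by
              ring
          _ ≤ _ := by gcongr; exact hu.antitone hγ hγc
    _ = _ := by
        rw [lintegral_add_right _ (hγγ.const_mul _), lintegral_const_mul' _ _ ENNReal.ofReal_ne_top]
        rfl

theorem resolventComp_le_add_right (hu : SatisfiesResolventEq m u)
    (hmeas : Measurable fun q : S × S => u γ q.1 q.2) (hγ : 0 ≤ γ) (hγa : γ ≤ a) (hab : a ≤ b)
    (hγc : γ ≤ c) :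
    resolventComp m u c a x y ≤ resolventComp m u c b x y +
      ENNReal.ofReal ((b - a) / (b - γ)) * resolventComp m u γ γ x y := by
  have hγγ : Measurable fun w => u γ x w * u γ w y :=
    (hmeas.comp measurable_prodMk_left).mul (hmeas.comp measurable_prodMk_right)
  calc resolventComp m u c a x y
      ≤ ∫⁻ w, u c x w * u b w y +
          ENNReal.ofReal ((b - a) / (b - γ)) * (u γ x w * u γ w y) ∂m := by
        refine lintegral_mono fun w => ?_
        calc u c x w * u a w y
            ≤ u c x w * (u b w y + ENNReal.ofReal ((b - a) / (b - γ)) * u γ w y) := by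
              gcongr; exact hu.le_add_ofReal_mul hγ hγa hab
          _ = u c x w * u b w y + ENNReal.ofReal ((b - a) / (b - γ)) * (u c x w * u γ w y) := by
              ring
          _ ≤ _ := by gcongr; exact hu.antitone hγ hγc
    _ = _ := by
        rw [lintegral_add_right _ (hγγ.const_mul _), lintegral_const_mul' _ _ ENNReal.ofReal_ne_top]
        rfl

theorem resolventComp_lt_top (hu : SatisfiesResolventEq m u) (ha : 0 ≤ a) (hab : a < b)
    (hfin : u a x y < ⊤) : resolventComp m u a b x y < ⊤ := by
  rw [hu a b ha hab.le x y, ENNReal.add_lt_top] at hfin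
  exact ENNReal.lt_top_of_mul_ne_top_right hfin.2.ne (ENNReal.ofReal_pos.2 (sub_pos.2 hab)).ne'

theorem toReal_eq_add (hu : SatisfiesResolventEq m u) (ha : 0 ≤ a) (hab : a ≤ b)
    (hfin : u a x y ≠ ⊤) :
    (u a x y).toReal = (u b x y).toReal + (b - a) * (resolventComp m u a b x y).toReal := by
  rw [hu a b ha hab x y] at hfin ⊢
  rw [ENNReal.toReal_add (ENNReal.add_ne_top.1 hfin).1 (ENNReal.add_ne_top.1 hfin).2,
    ENNReal.toReal_mul, ENNReal.toReal_ofReal (sub_nonneg.2 hab)]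

theorem toReal_sub_toReal (hu : SatisfiesResolventEq m u) (ha : 0 ≤ a) (hb : 0 ≤ b)
    (hfin : u (min a b) x y ≠ ⊤) :
    (u b x y).toReal - (u a x y).toReal =
      (b - a) * -(resolventComp m u (min a b) (max a b) x y).toReal := by
  rcases le_total a b with hab | hba
  · rw [min_eq_left hab, max_eq_right hab] at *
    rw [hu.toReal_eq_add ha hab hfin]; ring
  · rw [min_eq_right hba, max_eq_left hba] at *
    rw [hu.toReal_eq_add hb hba hfin]; ring

theorem tendsto_resolventComp_min_max (hu : SatisfiesResolventEq m u) {α : ℝ}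
    (hmeas : Measurable fun q : S × S => u γ q.1 q.2) (hγ : 0 ≤ γ) (hγα : γ < α)
    (hfin : resolventComp m u γ γ x y ≠ ⊤) :
    Tendsto (fun β => resolventComp m u (min α β) (max α β) x y) (𝓝 α)
      (𝓝 (resolventComp m u α α x y)) := by
  set ε : ℝ → ℝ≥0∞ := fun β => ENNReal.ofReal (|β - α| / (α - γ)) * resolventComp m u γ γ x y
  have hε : Tendsto ε (𝓝 α) (𝓝 0) := by
    have hcoef : Continuous fun β : ℝ => ENNReal.ofReal (|β - α| / (α - γ)) :=
      ENNReal.continuous_ofReal.comp (by fun_prop)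
    simpa using ENNReal.Tendsto.mul_const (hcoef.tendsto α) (Or.inr hfin)
  have hα : 0 ≤ α := hγ.trans hγα.le
  have hbounds : ∀ᶠ β in 𝓝 α,
      resolventComp m u (min α β) (max α β) x y ≤ resolventComp m u α α x y + ε β ∧
      resolventComp m u α α x y ≤ resolventComp m u (min α β) (max α β) x y + ε β := by
    filter_upwards [Ioi_mem_nhds hγα] with β (hβ : γ < β)
    simp only [ε]
    rcases le_total α β with hαβ | hβα
    · rw [min_eq_left hαβ, max_eq_right hαβ]
      refine ⟨(hu.resolventComp_anti hα le_rfl hα hαβ).trans le_self_add,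
        (hu.resolventComp_le_add_right hmeas hγ hγα.le hαβ hγα.le).trans ?_⟩
      gcongr
      exact le_abs_self _
    · rw [min_eq_right hβα, max_eq_left hβα]
      refine ⟨(hu.resolventComp_le_add_left hmeas hγ hβ.le hβα hγα.le).trans_eq ?_,
        (hu.resolventComp_anti (hγ.trans hβ.le) hβα hα le_rfl).trans le_self_add⟩
      rw [abs_of_nonpos (sub_nonpos.2 hβα), neg_sub]
  refine tendsto_of_tendsto_of_tendsto_of_le_of_le' ?_ ?_
    (hbounds.mono fun β hβ => tsub_le_iff_right.2 hβ.2) (hbounds.mono fun β hβ => hβ.1)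
  · simpa using ENNReal.Tendsto.sub tendsto_const_nhds hε (Or.inr zero_ne_top)
  · simpa using tendsto_const_nhds.add hε

end SatisfiesResolventEq

end Resolvent

/-- Differentiability of the resolvent: if `u^α(x,y) < ∞` for all `α > 0`, then for every
`α > 0` the integral `∫ u^α(x,w) u^α(w,y) dm(w)` is finite and
`β ↦ u^β(x,y)` is differentiable at `α` with derivative `-∫ u^α(x,w) u^α(w,y) dm(w)`. -/
theorem resolvent_hasDerivAt {S : Type*} [MeasurableSpace S] (m : Measure S)
    (u : ℝ → S → S → ℝ≥0∞)
    (humeas : ∀ α : ℝ, Measurable (fun q : S × S => u α q.1 q.2))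
    (hres : ∀ α β : ℝ, 0 ≤ α → α ≤ β → ∀ x y : S,
      u α x y = u β x y + ENNReal.ofReal (β - α) * ∫⁻ w, u α x w * u β w y ∂m)
    (x y : S) (hfin : ∀ α : ℝ, 0 < α → u α x y < ⊤) :
    ∀ α : ℝ, 0 < α →
      (∫⁻ w, u α x w * u α w y ∂m) < ⊤ ∧
      HasDerivAt (fun β : ℝ => (u β x y).toReal)
        (-(∫⁻ w, u α x w * u α w y ∂m).toReal) α := by
  have hu : SatisfiesResolventEq m u := hres
  intro α hα
  have hfin_half : resolventComp m u (α / 2) (α / 2) x y < ⊤ :=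
    (hu.resolventComp_anti (by positivity) (by linarith) (by positivity) le_rfl).trans_lt
      (hu.resolventComp_lt_top (by positivity) (by linarith) (hfin (α / 4) (by positivity)))
  have hfin_α : resolventComp m u α α x y < ⊤ :=
    (hu.resolventComp_anti (by positivity) (by linarith) (by positivity) (by linarith)).trans_lt
      hfin_half
  refine ⟨hfin_α, ?_⟩
  have hsub : ∀ᶠ β in 𝓝 α, (u β x y).toReal - (u α x y).toReal =
      (β - α) • -(resolventComp m u (min α β) (max α β) x y).toReal := by
    filter_upwards [Ioi_mem_nhds hα] with β (hβ : 0 < β)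
    exact hu.toReal_sub_toReal hα.le hβ.le (hfin _ (lt_min hα hβ)).ne
  exact hasDerivAt_of_eventually_sub_eq_smul hsub ((ENNReal.tendsto_toReal hfin_α.ne).comp
    (hu.tendsto_resolventComp_min_max (humeas _) (by positivity) (by linarith) hfin_half.ne)).neg
end

section
/- For every measurable f : [0,∞) → [0,∞], every n > 0, and every α ≥ 0, one has (with all integrals and sums taken in [0,∞]): ∫_0^∞ e^{−αt} ( ∑_{j=1}^∞ ((nt)^j / j!) e^{−nt} ∫_0^∞ (s^{j−1} n^j / (j−1)!) e^{−ns} f(s) ds ) dt = (n^2 / (α+n)^2) ∫_0^∞ e^{−s nα/(α+n)} f(s) ds. (This is the scalar form of Lemma 4.1 of the paper: the α-resolvent of the semigroup subordinated by a compound Poisson subordinator with rate n and exponential(n) jumps satisfies u_{(n)}^α(x,y) = (1+α/n)^{−2} u^{α/(1+α/n)}(x,y).) -/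
/-!
Everything is nonnegative, so Tonelli lets us move the `t`-integral past the sum over `j` and the
`s`-integral. The `t`-integral is a Gamma integral,
`∫_0^∞ e^{-αt} (nt)^{j+1}/(j+1)! e^{-nt} dt = n^{j+1}/(α+n)^{j+2}`,
and the resulting sum over `j` is an exponential series in `s n²/(α+n)`; the exponents combine
because `-n + n²/(α+n) = -nα/(α+n)`.
-/

open MeasureTheory ENNReal

open scoped Nat

lemma lintegral_Ici_pow_mul_exp_neg_mul (k : ℕ) {r : ℝ} (hr : 0 < r) :
    ∫⁻ x in Set.Ici 0, ENNReal.ofReal (x ^ k * Real.exp (-(r * x)))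
      = ENNReal.ofReal (k ! / r ^ (k + 1)) := by
  have hk : (0 : ℝ) < k + 1 := by positivity
  have key := Real.integral_rpow_mul_exp_neg_mul_Ioi hk hr
  simp only [add_sub_cancel_right, Real.rpow_natCast] at key
  have hint : IntegrableOn (fun x : ℝ ↦ x ^ k * Real.exp (-(r * x))) (Set.Ioi 0) :=
    .of_integral_ne_zero (by rw [key]; positivity)
  have hnonneg :
      0 ≤ᵐ[volume.restrict (Set.Ioi 0)] fun x : ℝ ↦ x ^ k * Real.exp (-(r * x)) := by
    filter_upwards [ae_restrict_mem measurableSet_Ioi] with x hx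
    exact mul_nonneg (pow_nonneg (le_of_lt hx) _) (Real.exp_nonneg _)
  rw [← Measure.restrict_congr_set Ioi_ae_eq_Ici,
    ← ofReal_integral_eq_lintegral_ofReal hint hnonneg, key,
    Real.Gamma_nat_eq_factorial, one_div, Real.inv_rpow hr.le, inv_mul_eq_div]
  norm_cast

lemma ENNReal.tsum_ofReal_pow_div_factorial {x : ℝ} (hx : 0 ≤ x) :
    ∑' j : ℕ, ENNReal.ofReal (x ^ j / j !) = ENNReal.ofReal (Real.exp x) := by
  rw [← ENNReal.ofReal_tsum_of_nonneg (fun j ↦ by positivity)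
      (Real.summable_pow_div_factorial x), Real.exp_eq_exp_ℝ,
    (NormedSpace.expSeries_div_hasSum_exp x).tsum_eq]

lemma lintegral_tsum_mul_lintegral {X Y : Type*} [MeasurableSpace X] [MeasurableSpace Y]
    {μ : Measure X} {ν : Measure Y} {b : ℕ → X → ℝ≥0∞} {g : ℕ → Y → ℝ≥0∞}
    (hb : ∀ j, AEMeasurable (b j) μ) (hg : ∀ j, AEMeasurable (g j) ν) :
    ∫⁻ x, ∑' j, b j x * ∫⁻ y, g j y ∂ν ∂μ
      = ∫⁻ y, ∑' j, (∫⁻ x, b j x ∂μ) * g j y ∂ν := by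
  rw [lintegral_tsum fun j ↦ (hb j).mul_const _, lintegral_tsum fun j ↦ (hg j).const_mul _]
  exact tsum_congr fun j ↦ by
    rw [lintegral_mul_const'' _ (hb j), lintegral_const_mul'' _ (hg j)]

lemma setLIntegral_exp_mul_poisson_weight (k : ℕ) {n α : ℝ} (hn : 0 ≤ n) (hαn : 0 < α + n) :
    ∫⁻ t in Set.Ici 0, ENNReal.ofReal (Real.exp (-α * t)) *
        ENNReal.ofReal ((n * t) ^ k / k ! * Real.exp (-n * t))
      = ENNReal.ofReal (n ^ k / (α + n) ^ (k + 1)) := by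
  have hsplit : ∀ t : ℝ, ENNReal.ofReal (Real.exp (-α * t)) *
        ENNReal.ofReal ((n * t) ^ k / k ! * Real.exp (-n * t))
      = ENNReal.ofReal (n ^ k / k !) * ENNReal.ofReal (t ^ k * Real.exp (-((α + n) * t))) := by
    intro t
    rw [← ENNReal.ofReal_mul (Real.exp_nonneg _), ← ENNReal.ofReal_mul (by positivity),
      show -((α + n) * t) = -α * t + -n * t by ring, Real.exp_add, mul_pow]
    congr 1
    ring
  have hmeas : Measurable fun t : ℝ ↦ ENNReal.ofReal (t ^ k * Real.exp (-((α + n) * t))) := by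
    fun_prop
  simp_rw [hsplit]
  rw [lintegral_const_mul _ hmeas, lintegral_Ici_pow_mul_exp_neg_mul k hαn,
    ← ENNReal.ofReal_mul (by positivity)]
  congr 1
  field_simp

lemma tsum_resolvent_weight_mul_gamma_density {n α s : ℝ} (hn : 0 ≤ n) (hαn : 0 < α + n)
    (hs : 0 ≤ s) :
    ∑' j : ℕ, ENNReal.ofReal (n ^ (j + 1) / (α + n) ^ (j + 2)) *
        ENNReal.ofReal (s ^ j * n ^ (j + 1) / j ! * Real.exp (-n * s))
      = ENNReal.ofReal (n ^ 2 / (α + n) ^ 2) *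
          ENNReal.ofReal (Real.exp (-(n * α / (α + n)) * s)) := by
  have hterm : ∀ j : ℕ, ENNReal.ofReal (n ^ (j + 1) / (α + n) ^ (j + 2)) *
        ENNReal.ofReal (s ^ j * n ^ (j + 1) / j ! * Real.exp (-n * s))
      = ENNReal.ofReal (n ^ 2 / (α + n) ^ 2 * Real.exp (-n * s)) *
          ENNReal.ofReal ((s * n ^ 2 / (α + n)) ^ j / j !) := by
    intro j
    rw [← ENNReal.ofReal_mul (by positivity), ← ENNReal.ofReal_mul (by positivity)]
    congr 1
    rw [div_pow]
    field_simp
    ring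
  have hexp : -n * s + s * n ^ 2 / (α + n) = -(n * α / (α + n)) * s := by
    field_simp
    ring
  rw [tsum_congr hterm, ENNReal.tsum_mul_left,
    ENNReal.tsum_ofReal_pow_div_factorial (by positivity),
    ← ENNReal.ofReal_mul (by positivity), mul_assoc, ← Real.exp_add, hexp,
    ENNReal.ofReal_mul (by positivity)]

/-- Scalar form of Lemma 4.1 of the paper: the `α`-resolvent of a semigroup subordinated by a
compound Poisson subordinator with rate `n` and exponential(`n`) jumps is
`(1+α/n)⁻² u^{α/(1+α/n)}`, i.e.
`∫_0^∞ e^{-αt} Σ_{j≥1} ((nt)^j/j!) e^{-nt} ∫_0^∞ (s^{j-1} n^j/(j-1)!) e^{-ns} f(s) ds dt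
  = (n²/(α+n)²) ∫_0^∞ e^{-s nα/(α+n)} f(s) ds`. -/
theorem subordinated_resolvent_scalar (f : ℝ → ℝ≥0∞) (hf : Measurable f)
    (n : ℝ) (hn : 0 < n) (α : ℝ) (hα : 0 ≤ α) :
    ∫⁻ t in Set.Ici (0 : ℝ),
        ENNReal.ofReal (Real.exp (-α * t)) *
          ∑' j : ℕ,
            ENNReal.ofReal ((n * t) ^ (j + 1) / (Nat.factorial (j + 1)) *
                Real.exp (-n * t)) *
              ∫⁻ s in Set.Ici (0 : ℝ),
                ENNReal.ofReal (s ^ j * n ^ (j + 1) / (Nat.factorial j) *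
                    Real.exp (-n * s)) * f s
      = ENNReal.ofReal (n ^ 2 / (α + n) ^ 2) *
          ∫⁻ s in Set.Ici (0 : ℝ),
            ENNReal.ofReal (Real.exp (-(n * α / (α + n)) * s)) * f s := by
  have hαn : 0 < α + n := by linarith
  simp_rw [← ENNReal.tsum_mul_left, ← mul_assoc]
  rw [lintegral_tsum_mul_lintegral (fun j ↦ by fun_prop) (fun j ↦ by fun_prop)]
  simp_rw [setLIntegral_exp_mul_poisson_weight _ hn.le hαn, ← mul_assoc, ENNReal.tsum_mul_right]
  rw [← lintegral_const_mul _ (by fun_prop)]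
  refine setLIntegral_congr_fun measurableSet_Ici fun s hs ↦ ?_
  rw [tsum_resolvent_weight_mul_gamma_density hn.le hαn hs, mul_assoc]
end
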